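/- In a one-period model (T = 1) with deterministic initial bid/ask prices S^b_0 ≤ S^a_0, rates R^d_1 ≤ R^c_1, and finitely many terminal states, there is no arbitrage if and only if there exist R ∈ [R^d_1, R^c_1], S_0 ∈ [S^b_0, S^a_0] and a probability vector p with all entries positive such that Σ_ω p(ω) S_1(ω) = R S_0 for some choice of F_1-measurable S_1 with S^b_1 ≤ S_1 ≤ S^a_1. -/

import Mathlib

/-!
If `p` is a strictly positive probability with `E_p S_1 = R S_0`, replacing the spreads by the
single prices `R`, `S_0`, `S_1` raises every liquidation value and lowers every cost, so the
`p`-expected liquidation value of a position is at most `R` times its cost; hence a position of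
nonpositive cost cannot end nonnegative and somewhere positive.

Conversely, buying a share with borrowed cash and shorting one while lending the proceeds show
that, without arbitrage, `S^b_1` cannot lie at or above `R^c_1 S^a_0` everywhere and strictly
above somewhere, and dually for `S^a_1` and `R^d_1 S^b_0`. This leaves a price
`x ∈ [R^d_1 S^b_0, R^c_1 S^a_0]` and a selection `S^b_1 ≤ S_1 ≤ S^a_1` taking values below `x`
iff it takes values above `x`, which makes `x` a strictly positive weighted mean of `S_1`;
finally `x` factors as `R S_0`.
-/

open Finset

section Weights

variable {Ω : Type*}

/-- For finite nonempty `Ω` this says exactly that `x` is a mean of `v` with strictly positive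
weights; it includes the case `v = fun _ => x`. -/
def Straddles (v : Ω → ℝ) (x : ℝ) : Prop := (∃ ω, v ω < x) ↔ ∃ ω, x < v ω

theorem straddles_const (x : ℝ) : Straddles (fun _ : Ω => x) x := Iff.rfl

variable [Fintype Ω]

-- The extra weight at `ω₀` cancels the unweighted sum `s`.
theorem exists_pos_weights_sum_mul_eq_zero_of_mul_neg {f : Ω → ℝ} {ω₀ : Ω}
    (h : (∑ ω, f ω) * f ω₀ < 0) : ∃ w : Ω → ℝ, (∀ ω, 0 < w ω) ∧ ∑ ω, w ω * f ω = 0 := by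
  classical
  set s := ∑ ω, f ω
  have hf : f ω₀ ≠ 0 := by rintro h0; simp [h0] at h
  refine ⟨fun ω => f ω₀ ^ 2 + if ω = ω₀ then -(s * f ω₀) else 0, fun ω => ?_, ?_⟩
  · have : 0 ≤ if ω = ω₀ then -(s * f ω₀) else 0 := by split_ifs <;> linarith
    positivity
  · simp only [add_mul, sum_add_distrib, ← mul_sum, ite_mul, zero_mul, sum_ite_eq', mem_univ,
      if_true]
    ring

theorem exists_pos_weights_sum_mul_eq_zero {f : Ω → ℝ} (h : Straddles f 0) :
    ∃ w : Ω → ℝ, (∀ ω, 0 < w ω) ∧ ∑ ω, w ω * f ω = 0 := by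
  rcases lt_trichotomy (∑ ω, f ω) 0 with hs | hs | hs
  · obtain ⟨ω₀, hω₀⟩ := h.1 <| by simpa using exists_lt_of_sum_lt (hs.trans_eq sum_const_zero.symm)
    exact exists_pos_weights_sum_mul_eq_zero_of_mul_neg (mul_neg_of_neg_of_pos hs hω₀)
  · exact ⟨1, fun _ => one_pos, by simpa using hs⟩
  · obtain ⟨ω₀, hω₀⟩ := h.2 <| by simpa using exists_lt_of_sum_lt (sum_const_zero.trans_lt hs)
    exact exists_pos_weights_sum_mul_eq_zero_of_mul_neg (mul_neg_of_pos_of_neg hs hω₀)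

theorem exists_pos_prob_sum_mul_eq [Nonempty Ω] {v : Ω → ℝ} {x : ℝ} (h : Straddles v x) :
    ∃ p : Ω → ℝ, (∀ ω, 0 < p ω) ∧ ∑ ω, p ω = 1 ∧ ∑ ω, p ω * v ω = x := by
  obtain ⟨w, hw, hwv⟩ := exists_pos_weights_sum_mul_eq_zero (f := fun ω => v ω - x)
    (by simpa only [Straddles, sub_neg, sub_pos] using h)
  have hW : 0 < ∑ ω, w ω := sum_pos (fun ω _ => hw ω) univ_nonempty
  have hwv' : ∑ ω, w ω * v ω = x * ∑ ω, w ω := by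
    simp only [mul_sub, sum_sub_distrib, ← sum_mul] at hwv
    linarith
  refine ⟨fun ω => w ω / ∑ ν, w ν, fun ω => div_pos (hw ω) hW, ?_, ?_⟩
  · rw [← sum_div, div_self hW.ne']
  · simp only [div_mul_eq_mul_div, ← sum_div, hwv', mul_div_cancel_right₀ _ hW.ne']

end Weights

section Selection

variable {Ω : Type*}

theorem exists_mem_Icc_straddles_of_lt_of_lt {Sb Sa : Ω → ℝ} {x : ℝ} {ω₁ ω₂ : Ω}
    (hba : ∀ ω, Sb ω ≤ Sa ω) (h₁ : Sb ω₁ < x) (h₂ : x < Sa ω₂) :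
    ∃ S : Ω → ℝ, (∀ ω, S ω ∈ Set.Icc (Sb ω) (Sa ω)) ∧ Straddles S x := by
  classical
  by_cases hpair : ∃ ω ω', ω ≠ ω' ∧ Sb ω < x ∧ x < Sa ω'
  · obtain ⟨ω, ω', hne, hω, hω'⟩ := hpair
    refine ⟨Function.update Sb ω' (Sa ω'), fun ν => ?_, iff_of_true
      ⟨ω, by rwa [Function.update_of_ne hne]⟩ ⟨ω', by rwa [Function.update_self]⟩⟩
    rcases eq_or_ne ν ω' with rfl | hν
    · simpa using hba ν
    · simpa [Function.update_of_ne hν] using hba ν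
  · push Not at hpair
    refine ⟨fun _ => x, fun ω => ⟨?_, ?_⟩, straddles_const x⟩
    · by_contra! hlt
      have hne : ω₁ ≠ ω := by rintro rfl; exact hlt.not_gt h₁
      exact (hpair ω₁ ω hne h₁).not_gt (hlt.trans_le (hba ω))
    · by_contra! hlt
      have hne : ω ≠ ω₂ := by rintro rfl; exact hlt.not_gt h₂
      exact (hpair ω ω₂ hne ((hba ω).trans_lt hlt)).not_gt h₂

theorem exists_mem_Icc_mem_Ioo {a b m M : ℝ} (hab : a ≤ b) (haM : a < M) (hmb : m < b)
    (hmM : m < M) : ∃ x ∈ Set.Icc a b, m < x ∧ x < M := by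
  refine ⟨(max a m + min b M) / 2, ⟨?_, ?_⟩, ?_, ?_⟩ <;>
    linarith [le_max_left a m, le_max_right a m, min_le_left b M, min_le_right b M,
      le_min hab haM.le, max_le hab hmb.le, lt_min hmb hmM, max_lt haM hmM]

theorem exists_mem_Icc_straddles [Fintype Ω] [Nonempty Ω] {Sb Sa : Ω → ℝ} {a b : ℝ}
    (hba : ∀ ω, Sb ω ≤ Sa ω) (hab : a ≤ b)
    (hb : (∀ ω, b ≤ Sb ω) → ∀ ω, Sb ω ≤ b) (ha : (∀ ω, Sa ω ≤ a) → ∀ ω, a ≤ Sa ω) :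
    ∃ x ∈ Set.Icc a b, ∃ S : Ω → ℝ,
      (∀ ω, S ω ∈ Set.Icc (Sb ω) (Sa ω)) ∧ Straddles S x := by
  obtain ⟨ωm, -, hm⟩ := exists_min_image univ Sb univ_nonempty
  obtain ⟨ωM, -, hM⟩ := exists_max_image univ Sa univ_nonempty
  by_cases hbm : b ≤ Sb ωm
  · have hSb : ∀ ω, b ≤ Sb ω := fun ω => hbm.trans (hm ω (mem_univ ω))
    exact ⟨b, ⟨hab, le_rfl⟩, fun _ => b,
      fun ω => ⟨hb hSb ω, (hSb ω).trans (hba ω)⟩, straddles_const b⟩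
  by_cases hMa : Sa ωM ≤ a
  · have hSa : ∀ ω, Sa ω ≤ a := fun ω => (hM ω (mem_univ ω)).trans hMa
    exact ⟨a, ⟨le_rfl, hab⟩, fun _ => a,
      fun ω => ⟨(hba ω).trans (hSa ω), ha hSa ω⟩, straddles_const a⟩
  push Not at hbm hMa
  rcases lt_or_ge (Sb ωm) (Sa ωM) with hmM | hMm
  · obtain ⟨x, hx, hmx, hxM⟩ := exists_mem_Icc_mem_Ioo hab hMa hbm hmM
    exact ⟨x, hx, exists_mem_Icc_straddles_of_lt_of_lt hba hmx hxM⟩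
  · refine ⟨Sb ωm, ⟨hMa.le.trans hMm, hbm.le⟩, fun _ => Sb ωm, fun ω => ⟨?_, ?_⟩,
    straddles_const _⟩
    · exact (hba ω).trans ((hM ω (mem_univ ω)).trans hMm)
    · exact (hm ω (mem_univ ω)).trans (hba ω)

end Selection

theorem exists_mem_Icc_mul_eq {Rd Rc S S' x : ℝ} (hRdc : Rd ≤ Rc) (hRc : 0 < Rc) (hS : 0 < S)
    (hSS' : S ≤ S') (hx : x ∈ Set.Icc (Rd * S) (Rc * S')) :
    ∃ R ∈ Set.Icc Rd Rc, ∃ S0 ∈ Set.Icc S S', R * S0 = x := by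
  rcases le_or_gt x (Rc * S) with h | h
  · exact ⟨x / S, ⟨(le_div_iff₀ hS).2 hx.1, (div_le_iff₀ hS).2 h⟩, S, ⟨le_rfl, hSS'⟩,
      div_mul_cancel₀ x hS.ne'⟩
  · exact ⟨Rc, ⟨hRdc, le_rfl⟩, x / Rc, ⟨(le_div_iff₀ hRc).2 (by linarith),
      (div_le_iff₀ hRc).2 (by linarith [hx.2])⟩, mul_div_cancel₀ x hRc.ne'⟩

section Model

-- The paper's cost `α_0` and time-1 liquidation value of the position `(α, β)`.
def positionCost (Sb Sa α β : ℝ) : ℝ := α + max β 0 * Sa - max (-β) 0 * Sb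

def liquidationValue (Rd Rc Sb Sa α β : ℝ) : ℝ :=
  (max α 0 * Rd - max (-α) 0 * Rc) + max β 0 * Sb - max (-β) 0 * Sa

theorem max_mul_sub_max_neg_mul_le (q : ℝ) {u s w : ℝ} (hus : u ≤ s) (hsw : s ≤ w) :
    max q 0 * u - max (-q) 0 * w ≤ q * s := by
  rcases le_total q 0 with hq | hq
  · rw [max_eq_right hq, max_eq_left (neg_nonneg.2 hq)]; nlinarith
  · rw [max_eq_left hq, max_eq_right (neg_nonpos.2 hq)]; nlinarith

theorem liquidationValue_le {Rd Rc Sb Sa R S : ℝ} (α β : ℝ) (hR : R ∈ Set.Icc Rd Rc)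
    (hS : S ∈ Set.Icc Sb Sa) : liquidationValue Rd Rc Sb Sa α β ≤ α * R + β * S := by
  have := max_mul_sub_max_neg_mul_le α hR.1 hR.2
  have := max_mul_sub_max_neg_mul_le β hS.1 hS.2
  unfold liquidationValue
  linarith

theorem add_mul_le_positionCost {Sb Sa S : ℝ} (α β : ℝ) (hS : S ∈ Set.Icc Sb Sa) :
    α + β * S ≤ positionCost Sb Sa α β := by
  have := max_mul_sub_max_neg_mul_le (-β) hS.1 hS.2
  rw [neg_neg] at this
  unfold positionCost
  linarith

theorem positionCost_buy (Sb Sa : ℝ) : positionCost Sb Sa (-Sa) 1 = 0 := by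
  simp [positionCost]

theorem liquidationValue_buy (Rd Rc Sb Sa : ℝ) {S : ℝ} (hS : 0 ≤ S) :
    liquidationValue Rd Rc Sb Sa (-S) 1 = Sb - Rc * S := by
  simp [liquidationValue, hS]; ring

theorem positionCost_sell (Sb Sa : ℝ) : positionCost Sb Sa Sb (-1) = 0 := by
  simp [positionCost]

theorem liquidationValue_sell (Rd Rc Sb Sa : ℝ) {S : ℝ} (hS : 0 ≤ S) :
    liquidationValue Rd Rc Sb Sa S (-1) = Rd * S - Sa := by
  simp [liquidationValue, hS]; ring

variable {Ω : Type*} {Sb0 Sa0 Rd1 Rc1 : ℝ} {Sb1 Sa1 : Ω → ℝ}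

def IsArbitrage (Sb0 Sa0 Rd1 Rc1 : ℝ) (Sb1 Sa1 : Ω → ℝ) (α β : ℝ) : Prop :=
  positionCost Sb0 Sa0 α β ≤ 0 ∧ (∀ ω, 0 ≤ liquidationValue Rd1 Rc1 (Sb1 ω) (Sa1 ω) α β) ∧
    ∃ ω, 0 < liquidationValue Rd1 Rc1 (Sb1 ω) (Sa1 ω) α β

theorem bid_le_of_not_isArbitrage (hNA : ¬∃ α β, IsArbitrage Sb0 Sa0 Rd1 Rc1 Sb1 Sa1 α β)
    (hSa0 : 0 ≤ Sa0) (h : ∀ ω, Rc1 * Sa0 ≤ Sb1 ω) (ω : Ω) : Sb1 ω ≤ Rc1 * Sa0 := by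
  by_contra! hlt
  refine hNA ⟨-Sa0, 1, (positionCost_buy _ _).le, fun ν => ?_, ω, ?_⟩
  · rw [liquidationValue_buy _ _ _ _ hSa0]; linarith [h ν]
  · rw [liquidationValue_buy _ _ _ _ hSa0]; linarith

theorem le_ask_of_not_isArbitrage (hNA : ¬∃ α β, IsArbitrage Sb0 Sa0 Rd1 Rc1 Sb1 Sa1 α β)
    (hSb0 : 0 ≤ Sb0) (h : ∀ ω, Sa1 ω ≤ Rd1 * Sb0) (ω : Ω) : Rd1 * Sb0 ≤ Sa1 ω := by
  by_contra! hlt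
  refine hNA ⟨Sb0, -1, (positionCost_sell _ _).le, fun ν => ?_, ω, ?_⟩
  · rw [liquidationValue_sell _ _ _ _ hSb0]; linarith [h ν]
  · rw [liquidationValue_sell _ _ _ _ hSb0]; linarith

variable [Fintype Ω] {R S0 : ℝ} {p S1 : Ω → ℝ}

theorem sum_mul_liquidationValue_le (α β : ℝ) (hR0 : 0 ≤ R) (hR : R ∈ Set.Icc Rd1 Rc1)
    (hS0 : S0 ∈ Set.Icc Sb0 Sa0) (hp : ∀ ω, 0 ≤ p ω) (hp1 : ∑ ω, p ω = 1)
    (hS1 : ∀ ω, S1 ω ∈ Set.Icc (Sb1 ω) (Sa1 ω)) (hsum : ∑ ω, p ω * S1 ω = R * S0) :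
    ∑ ω, p ω * liquidationValue Rd1 Rc1 (Sb1 ω) (Sa1 ω) α β ≤ R * positionCost Sb0 Sa0 α β :=
  calc _ ≤ ∑ ω, p ω * (α * R + β * S1 ω) :=
        sum_le_sum fun ω _ => mul_le_mul_of_nonneg_left (liquidationValue_le α β hR (hS1 ω)) (hp ω)
    _ = R * (α + β * S0) := by
        simp only [mul_add, sum_add_distrib, ← sum_mul, hp1, mul_left_comm _ β, ← mul_sum, hsum]
        ring
    _ ≤ R * positionCost Sb0 Sa0 α β :=
        mul_le_mul_of_nonneg_left (add_mul_le_positionCost α β hS0) hR0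

theorem not_exists_isArbitrage (hR0 : 0 ≤ R) (hR : R ∈ Set.Icc Rd1 Rc1)
    (hS0 : S0 ∈ Set.Icc Sb0 Sa0) (hp : ∀ ω, 0 < p ω) (hp1 : ∑ ω, p ω = 1)
    (hS1 : ∀ ω, S1 ω ∈ Set.Icc (Sb1 ω) (Sa1 ω)) (hsum : ∑ ω, p ω * S1 ω = R * S0) :
    ¬∃ α β, IsArbitrage Sb0 Sa0 Rd1 Rc1 Sb1 Sa1 α β := by
  rintro ⟨α, β, hcost, hV, ω₀, hω₀⟩
  have hpos : 0 < ∑ ω, p ω * liquidationValue Rd1 Rc1 (Sb1 ω) (Sa1 ω) α β :=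
    sum_pos' (fun ω _ => mul_nonneg (hp ω).le (hV ω)) ⟨ω₀, mem_univ _, mul_pos (hp ω₀) hω₀⟩
  have := sum_mul_liquidationValue_le α β hR0 hR hS0 (fun ω => (hp ω).le) hp1 hS1 hsum
  linarith [mul_nonpos_of_nonneg_of_nonpos hR0 hcost]

end Model

theorem one_period_ftap_general
    {Ω : Type*} [Fintype Ω] [Nonempty Ω]
    (Sb0 Sa0 Rd1 Rc1 : ℝ) (Sb1 Sa1 : Ω → ℝ)
    (hSb0 : 0 < Sb0) (hba0 : Sb0 ≤ Sa0)
    (hRd1 : 0 < Rd1) (hdc1 : Rd1 ≤ Rc1)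
    (hba1 : ∀ ω, Sb1 ω ≤ Sa1 ω) :
    (¬ ∃ α1 β1 : ℝ,
      α1 + max β1 0 * Sa0 - max (-β1) 0 * Sb0 ≤ 0 ∧
      (∀ ω, 0 ≤ (max α1 0 * Rd1 - max (-α1) 0 * Rc1)
        + max β1 0 * Sb1 ω - max (-β1) 0 * Sa1 ω) ∧
      (∃ ω, 0 < (max α1 0 * Rd1 - max (-α1) 0 * Rc1)
        + max β1 0 * Sb1 ω - max (-β1) 0 * Sa1 ω)) ↔
    (∃ (R S0 : ℝ) (p S1 : Ω → ℝ),
      R ∈ Set.Icc Rd1 Rc1 ∧ S0 ∈ Set.Icc Sb0 Sa0 ∧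
      (∀ ω, 0 < p ω) ∧ (∑ ω, p ω) = 1 ∧
      (∀ ω, Sb1 ω ≤ S1 ω ∧ S1 ω ≤ Sa1 ω) ∧
      (∑ ω, p ω * S1 ω) = R * S0) := by
  have hSa0 : 0 < Sa0 := hSb0.trans_le hba0
  refine ⟨fun hNA => ?_, ?_⟩
  · obtain ⟨x, hx, S1, hS1, hS1x⟩ := exists_mem_Icc_straddles hba1
      (mul_le_mul hdc1 hba0 hSb0.le (hRd1.le.trans hdc1))
      (bid_le_of_not_isArbitrage hNA hSa0.le) (le_ask_of_not_isArbitrage hNA hSb0.le)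
    obtain ⟨p, hp, hp1, hpx⟩ := exists_pos_prob_sum_mul_eq hS1x
    obtain ⟨R, hR, S0, hS0, rfl⟩ := exists_mem_Icc_mul_eq hdc1 (hRd1.trans_le hdc1) hSb0 hba0 hx
    exact ⟨R, S0, p, S1, hR, hS0, hp, hp1, hS1, hpx⟩
  · rintro ⟨R, S0, p, S1, hR, hS0, hp, hp1, hS1, hsum⟩
    exact not_exists_isArbitrage (hRd1.le.trans hR.1) hR hS0 hp hp1 hS1 hsum

/-- One-period fundamental theorem with bid-ask spreads and two interest rates:
no arbitrage iff there exist `R ∈ [R^d_1, R^c_1]`, `S_0 ∈ [S^b_0, S^a_0]`, a strictly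
positive probability vector `p` and `S_1` with `S^b_1 ≤ S_1 ≤ S^a_1` such that
`∑ ω, p ω * S_1 ω = R * S_0`. -/
theorem one_period_ftap
    {Ω : Type*} [Fintype Ω] [Nonempty Ω]
    (Sb0 Sa0 Rd1 Rc1 : ℝ) (Sb1 Sa1 : Ω → ℝ)
    (hSb0 : 0 < Sb0) (hba0 : Sb0 ≤ Sa0)
    (hRd1 : 0 < Rd1) (hdc1 : Rd1 ≤ Rc1)
    (hSb1 : ∀ ω, 0 < Sb1 ω) (hba1 : ∀ ω, Sb1 ω ≤ Sa1 ω) :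
    (¬ ∃ α1 β1 : ℝ,
      α1 + max β1 0 * Sa0 - max (-β1) 0 * Sb0 ≤ 0 ∧
      (∀ ω, 0 ≤ (max α1 0 * Rd1 - max (-α1) 0 * Rc1)
        + max β1 0 * Sb1 ω - max (-β1) 0 * Sa1 ω) ∧
      (∃ ω, 0 < (max α1 0 * Rd1 - max (-α1) 0 * Rc1)
        + max β1 0 * Sb1 ω - max (-β1) 0 * Sa1 ω)) ↔
    (∃ (R S0 : ℝ) (p S1 : Ω → ℝ),
      R ∈ Set.Icc Rd1 Rc1 ∧ S0 ∈ Set.Icc Sb0 Sa0 ∧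
      (∀ ω, 0 < p ω) ∧ (∑ ω, p ω) = 1 ∧
      (∀ ω, Sb1 ω ≤ S1 ω ∧ S1 ω ≤ Sa1 ω) ∧
      (∑ ω, p ω * S1 ω) = R * S0) :=
  one_period_ftap_general Sb0 Sa0 Rd1 Rc1 Sb1 Sa1 hSb0 hba0 hRd1 hdc1 hba1
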